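/- Let W be independent of (X,Y). If a random variable U satisfies H(Y|U,X,W) = 0 (and I(U;X) ≥ 0 trivially), then H(U) ≥ H(Y|X) − H(X|Y). -/

import Mathlib

/-!
Independence makes the joint law of `(Y, W)` the product of its marginals, so
`H(Y) + H(W) = H(Y, W) ≤ H(X, Y, W, U)`, and `H(Y | X, W, U) = 0` says that the last entropy
equals `H(X, W, U)`, which by subadditivity is at most `H(X) + H(W) + H(U)`. Hence
`H(U) ≥ H(Y) - H(X)`, and `H(Y) - H(X) = H(Y|X) - H(X|Y)`.
-/

/-- Shannon entropy (base 2) of a finitely supported distribution given as a function. -/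
noncomputable def ent {α : Type*} [Fintype α] (q : α → ℝ) : ℝ :=
  - ∑ a, q a * Real.logb 2 (q a)

open Finset Real

lemma mul_log_le_mul_log {x y : ℝ} (hx : 0 ≤ x) (hxy : x ≤ y) : x * log x ≤ x * log y := by
  rcases hx.eq_or_lt with rfl | hx
  · simp
  · exact mul_le_mul_of_nonneg_left (log_le_log hx hxy) hx.le

lemma negMulLog_sum_le {ι : Type*} (s : Finset ι) {f : ι → ℝ} (hf : ∀ i ∈ s, 0 ≤ f i) :
    negMulLog (∑ i ∈ s, f i) ≤ ∑ i ∈ s, negMulLog (f i) := by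
  calc negMulLog (∑ i ∈ s, f i) = ∑ i ∈ s, -(f i * log (∑ j ∈ s, f j)) := by
        simp only [negMulLog, neg_mul, sum_mul, sum_neg_distrib]
    _ ≤ ∑ i ∈ s, negMulLog (f i) := sum_le_sum fun i hi => by
        rw [negMulLog, neg_mul, neg_le_neg_iff]
        exact mul_log_le_mul_log (hf i hi) (single_le_sum hf hi)

lemma mul_log_add_negMulLog_le {p r : ℝ} (hp : 0 ≤ p) (hr : 0 ≤ r) (hpr : r = 0 → p = 0) :
    p * log r + negMulLog p ≤ r - p := by
  rcases hp.eq_or_lt with rfl | hp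
  · simpa using hr
  have hr : 0 < r := hr.lt_of_ne fun h => hp.ne' (hpr h.symm)
  calc p * log r + negMulLog p = p * log (r / p) := by
        rw [log_div hr.ne' hp.ne', negMulLog]; ring
    _ ≤ p * (r / p - 1) := mul_le_mul_of_nonneg_left (log_le_sub_one_of_pos (by positivity)) hp.le
    _ = r - p := by field_simp

/-- Gibbs' inequality. -/
lemma sum_negMulLog_le_sum_neg_mul_log {ι : Type*} [Fintype ι] {p r : ι → ℝ}
    (hp : ∀ i, 0 ≤ p i) (hr : ∀ i, 0 ≤ r i) (hpr : ∀ i, r i = 0 → p i = 0)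
    (hsum : ∑ i, r i ≤ ∑ i, p i) :
    ∑ i, negMulLog (p i) ≤ ∑ i, -(p i * log (r i)) := by
  have h := sum_le_sum fun i (_ : i ∈ univ) => mul_log_add_negMulLog_le (hp i) (hr i) (hpr i)
  simp only [sum_add_distrib, sum_sub_distrib, sum_neg_distrib] at h ⊢
  linarith

section Entropy

variable {α β γ : Type*} [Fintype α] [Fintype β] [Fintype γ]

lemma ent_eq_sum_negMulLog_div (q : α → ℝ) : ent q = (∑ a, negMulLog (q a)) / log 2 := by
  simp only [ent, negMulLog, logb, sum_div, ← sum_neg_distrib]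
  congr 1 with a
  ring

lemma ent_le_ent_iff {q : α → ℝ} {r : β → ℝ} :
    ent q ≤ ent r ↔ ∑ a, negMulLog (q a) ≤ ∑ b, negMulLog (r b) := by
  simp only [ent_eq_sum_negMulLog_div]
  exact div_le_div_iff_of_pos_right (log_pos one_lt_two)

lemma ent_comp_equiv (e : α ≃ β) (q : β → ℝ) : ent (fun a => q (e a)) = ent q :=
  congrArg Neg.neg (Fintype.sum_equiv e _ _ fun _ => rfl)

lemma ent_marginal_le (q : α × β → ℝ) (hq : ∀ z, 0 ≤ q z) :
    ent (fun a => ∑ b, q (a, b)) ≤ ent q := by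
  rw [ent_le_ent_iff, Fintype.sum_prod_type]
  exact sum_le_sum fun a _ => negMulLog_sum_le _ fun b _ => hq (a, b)

lemma ent_marginal_middle_le {δ : Type*} [Fintype δ] (q : α × β × γ × δ → ℝ)
    (hq : ∀ z, 0 ≤ q z) : ent (fun bc : β × γ => ∑ a, ∑ d, q (a, bc.1, bc.2, d)) ≤ ent q := by
  let e : (β × γ) × (α × δ) ≃ α × β × γ × δ :=
    ⟨fun z => (z.2.1, z.1.1, z.1.2, z.2.2), fun z => ((z.2.1, z.2.2.1), (z.1, z.2.2.2)),
      fun _ => rfl, fun _ => rfl⟩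
  have h := ent_marginal_le (fun z => q (e z)) fun z => hq (e z)
  rwa [ent_comp_equiv, funext fun bc => Fintype.sum_prod_type (fun ad => q (e (bc, ad)))] at h

lemma ent_prod (q₁ : α → ℝ) (q₂ : β → ℝ) (h₁ : ∑ a, q₁ a = 1) (h₂ : ∑ b, q₂ b = 1) :
    ent (fun z : α × β => q₁ z.1 * q₂ z.2) = ent q₁ + ent q₂ := by
  simp only [ent_eq_sum_negMulLog_div, ← add_div, negMulLog_mul, Fintype.sum_prod_type,
    sum_add_distrib, ← sum_mul, ← mul_sum, h₁, h₂, one_mul]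

lemma ent_le_ent_add_ent (q : α × β → ℝ) (hq : ∀ z, 0 ≤ q z) (hq₁ : ∑ z, q z = 1) :
    ent q ≤ ent (fun a => ∑ b, q (a, b)) + ent (fun b => ∑ a, q (a, b)) := by
  set q₁ := fun a => ∑ b, q (a, b)
  set q₂ := fun b => ∑ a, q (a, b)
  have hle₁ (a : α) (b : β) : q (a, b) ≤ q₁ a := single_le_sum (fun b _ => hq (a, b)) (mem_univ b)
  have hle₂ (a : α) (b : β) : q (a, b) ≤ q₂ b := single_le_sum (fun a _ => hq (a, b)) (mem_univ a)
  have hsum₁ : ∑ a, q₁ a = 1 := by rw [← hq₁, Fintype.sum_prod_type]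
  have hsum₂ : ∑ b, q₂ b = 1 := by rw [← hq₁, Fintype.sum_prod_type_right]
  have hgibbs := sum_negMulLog_le_sum_neg_mul_log (r := fun z => q₁ z.1 * q₂ z.2) hq
    (fun z => mul_nonneg ((hq z).trans (hle₁ ..)) ((hq z).trans (hle₂ ..)))
    (fun z hz => by
      rcases mul_eq_zero.1 hz with h | h
      · exact le_antisymm (h ▸ hle₁ ..) (hq z)
      · exact le_antisymm (h ▸ hle₂ ..) (hq z))
    (by rw [Fintype.sum_prod_type, ← Fintype.sum_mul_sum, hsum₁, hsum₂, hq₁, one_mul])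
  have hcross (z : α × β) :
      -(q z * log (q₁ z.1 * q₂ z.2)) = -(q z * log (q₁ z.1)) + -(q z * log (q₂ z.2)) := by
    rcases (hq z).eq_or_lt with h | h
    · simp [← h]
    · rw [log_mul (h.trans_le (hle₁ ..)).ne' (h.trans_le (hle₂ ..)).ne']; ring
  have hcross₁ : ∑ z : α × β, -(q z * log (q₁ z.1)) = ∑ a, negMulLog (q₁ a) := by
    simp only [Fintype.sum_prod_type, negMulLog, q₁, sum_mul, neg_mul, sum_neg_distrib]
  have hcross₂ : ∑ z : α × β, -(q z * log (q₂ z.2)) = ∑ b, negMulLog (q₂ b) := by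
    simp only [Fintype.sum_prod_type_right, negMulLog, q₂, sum_mul, neg_mul, sum_neg_distrib]
  simp only [hcross, sum_add_distrib, hcross₁, hcross₂] at hgibbs
  rw [ent_eq_sum_negMulLog_div, ent_eq_sum_negMulLog_div, ent_eq_sum_negMulLog_div, ← add_div]
  gcongr

lemma ent_le_ent_add_ent_add_ent (q : α × β × γ → ℝ) (hq : ∀ z, 0 ≤ q z) (hq₁ : ∑ z, q z = 1) :
    ent q ≤ ent (fun a => ∑ b, ∑ c, q (a, b, c)) + ent (fun b => ∑ a, ∑ c, q (a, b, c))
      + ent (fun c => ∑ a, ∑ b, q (a, b, c)) := by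
  have hbc := ent_le_ent_add_ent (fun bc : β × γ => ∑ a, q (a, bc))
    (fun bc => sum_nonneg fun a _ => hq (a, bc)) (by rw [sum_comm, ← hq₁, Fintype.sum_prod_type])
  have habc := ent_le_ent_add_ent q hq hq₁
  simp only [Fintype.sum_prod_type] at habc
  simp only [sum_comm (γ := β), sum_comm (γ := γ)] at hbc
  linarith

end Entropy

/-- If `W ⊥ (X,Y)` and `H(Y|U,X,W) = 0`, then `H(U) ≥ H(Y|X) − H(X|Y)`. -/
theorem stmt7 {X Y W U : Type*} [Fintype X] [Fintype Y] [Fintype W] [Fintype U]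
    (p : X × Y × W × U → ℝ) (hpos : ∀ z, 0 ≤ p z) (hsum : ∑ z, p z = 1)
    (pX : X → ℝ) (hpX : ∀ x, pX x = ∑ y, ∑ w, ∑ u, p (x, y, w, u))
    (pY : Y → ℝ) (hpY : ∀ y, pY y = ∑ x, ∑ w, ∑ u, p (x, y, w, u))
    (pW : W → ℝ) (hpW : ∀ w, pW w = ∑ x, ∑ y, ∑ u, p (x, y, w, u))
    (pU : U → ℝ) (hpU : ∀ u, pU u = ∑ x, ∑ y, ∑ w, p (x, y, w, u))
    (pXY : X × Y → ℝ) (hpXY : ∀ x y, pXY (x, y) = ∑ w, ∑ u, p (x, y, w, u))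
    (pXWU : X × W × U → ℝ) (hpXWU : ∀ x w u, pXWU (x, w, u) = ∑ y, p (x, y, w, u))
    -- W is independent of (X,Y)
    (hindep : ∀ x y w, (∑ u, p (x, y, w, u)) = pXY (x, y) * pW w)
    -- H(Y|U,X,W) = 0
    (hH : ent p - ent pXWU = 0) :
    -- H(U) ≥ H(Y|X) − H(X|Y)
    ent pU ≥ (ent pXY - ent pX) - (ent pXY - ent pY) := by
  simp only [Fintype.sum_prod_type] at hsum
  have hY_sum : ∑ y, pY y = 1 := by simpa only [hpY, sum_comm (γ := Y)] using hsum
  have hW_sum : ∑ w, pW w = 1 := by simpa only [hpW, sum_comm (γ := W)] using hsum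
  have hYW_marg :
      (fun yw : Y × W => ∑ x, ∑ u, p (x, yw.1, yw.2, u)) = fun yw => pY yw.1 * pW yw.2 := by
    funext ⟨y, w⟩
    rw [hpY, sum_mul]
    exact sum_congr rfl fun x _ => by rw [hindep, hpXY]
  have hXWU_nonneg : ∀ z, 0 ≤ pXWU z := fun ⟨x, w, u⟩ =>
    hpXWU x w u ▸ sum_nonneg fun y _ => hpos _
  have hXWU_sum : ∑ z, pXWU z = 1 := by
    simpa only [Fintype.sum_prod_type, hpXWU, sum_comm (γ := Y)] using hsum
  have hX_marg : (fun x => ∑ w, ∑ u, pXWU (x, w, u)) = pX :=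
    funext fun x => by simp only [hpXWU, hpX, sum_comm (γ := Y)]
  have hW_marg : (fun w => ∑ x, ∑ u, pXWU (x, w, u)) = pW :=
    funext fun w => by simp only [hpXWU, hpW, sum_comm (γ := Y)]
  have hU_marg : (fun u => ∑ x, ∑ w, pXWU (x, w, u)) = pU :=
    funext fun u => by simp only [hpXWU, hpU, sum_comm (γ := Y)]
  have hYW_le : ent pY + ent pW ≤ ent p := by
    rw [← ent_prod pY pW hY_sum hW_sum, ← hYW_marg]
    exact ent_marginal_middle_le p hpos
  have hXWU_le : ent pXWU ≤ ent pX + ent pW + ent pU := by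
    simpa only [hX_marg, hW_marg, hU_marg] using
      ent_le_ent_add_ent_add_ent pXWU hXWU_nonneg hXWU_sum
  linarith
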